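/- arXiv:2312.06528 — 2 statements merged into one kernel-verified Lean document; each statement's English description precedes it below -/
import Mathlib

section
/- Fix a kernel K : ℝᵈ × ℝᵈ → ℝ, data points x⁽¹⁾,…,x⁽ⁿ⁾, labels y⁽¹⁾,…,y⁽ⁿ⁾, and stepsizes r'_0,…,r'_k ∈ ℝ. Define f_0 = 0 and f_{ℓ+1}(x) = f_ℓ(x) + r'_ℓ Σᵢ (y⁽ⁱ⁾ − f_ℓ(x⁽ⁱ⁾)) K(x⁽ⁱ⁾, x). Separately, define the Transformer recursion: for each test point x, set Ỹ⁽ⁱ⁾_0 = y⁽ⁱ⁾ for i ≤ n and Ỹ⁽ⁿ⁺¹⁾_0 = 0 (with x⁽ⁿ⁺¹⁾ = x), and Ỹ⁽ʲ⁾_{ℓ+1} = Ỹ⁽ʲ⁾_ℓ − r'_ℓ Σ_{i=1}^n Ỹ⁽ⁱ⁾_ℓ K(x⁽ⁱ⁾, x⁽ʲ⁾) for all j = 1…n+1. Then for all ℓ and all x: Ỹ⁽ⁿ⁺¹⁾_ℓ = −f_ℓ(x), and Ỹ⁽ⁱ⁾_ℓ = y⁽ⁱ⁾ − f_ℓ(x⁽ⁱ⁾)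 for i ≤ n. -/
/-! Every column of the Transformer recursion satisfies `Ỹ_ℓ = Ỹ_0 − f_ℓ(x⁽ʲ⁾)`: once this holds
on the data columns, both recursions add `r'_ℓ` times the same kernel combination of the data
residuals, so the identity propagates to all columns, including the test column. -/

theorem iterate_eq_initial_sub_functionalGD {X ι J R : Type*} [Fintype ι] [CommRing R]
    (K : X → X → R) (data : ι → X) (y : ι → R) (r : ℕ → R) (f : ℕ → X → R)
    (hf0 : f 0 = 0)
    (hfrec : ∀ ℓ x, f (ℓ + 1) x = f ℓ x + r ℓ * ∑ i, (y i - f ℓ (data i)) * K (data i) x)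
    (emb : ι → J) (p : J → X) (hp : ∀ i, p (emb i) = data i)
    (Y : ℕ → J → R) (hY0 : ∀ i, Y 0 (emb i) = y i)
    (hYrec : ∀ ℓ j, Y (ℓ + 1) j = Y ℓ j - r ℓ * ∑ i, Y ℓ (emb i) * K (data i) (p j)) :
    ∀ ℓ j, Y ℓ j = Y 0 j - f ℓ (p j) := by
  intro ℓ
  induction ℓ with
  | zero => simp [hf0]
  | succ ℓ ih =>
    have hres : ∀ i, Y ℓ (emb i) = y i - f ℓ (data i) := fun i => by rw [ih, hY0, hp]
    intro j
    rw [hYrec]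
    simp only [hres]
    rw [ih j, hfrec]
    ring

/-- Proposition 1, core identity: the Transformer label-row recursion exactly tracks
the residuals of kernel functional gradient descent. With `f₀ = 0`,
`f_{ℓ+1}(x) = f_ℓ(x) + r'_ℓ ∑ᵢ (yᵢ − f_ℓ(xᵢ)) K(xᵢ, x)`, and the recursion
`Ỹ⁽ʲ⁾_{ℓ+1} = Ỹ⁽ʲ⁾_ℓ − r'_ℓ ∑_{i≤n} Ỹ⁽ⁱ⁾_ℓ K(xᵢ, xⱼ)` started from
`Ỹ⁽ⁱ⁾₀ = yᵢ (i ≤ n)`, `Ỹ⁽ⁿ⁺¹⁾₀ = 0`, `x⁽ⁿ⁺¹⁾ = x`, we have for all `ℓ`: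
`Ỹ⁽ⁿ⁺¹⁾_ℓ = −f_ℓ(x)` and `Ỹ⁽ⁱ⁾_ℓ = yᵢ − f_ℓ(xᵢ)` for `i ≤ n`. -/
theorem transformer_tracks_functional_gd
    {d n : ℕ} (K : (Fin d → ℝ) → (Fin d → ℝ) → ℝ)
    (xdata : Fin n → (Fin d → ℝ)) (y : Fin n → ℝ) (r : ℕ → ℝ)
    (f : ℕ → (Fin d → ℝ) → ℝ)
    (hf0 : f 0 = 0)
    (hfrec : ∀ ℓ (x : Fin d → ℝ),
      f (ℓ + 1) x = f ℓ x + r ℓ * ∑ i, (y i - f ℓ (xdata i)) * K (xdata i) x)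
    (x : Fin d → ℝ) (x' : Fin (n + 1) → (Fin d → ℝ))
    (hx'last : x' (Fin.last n) = x)
    (hx'cast : ∀ i : Fin n, x' i.castSucc = xdata i)
    (Ytil : ℕ → Fin (n + 1) → ℝ)
    (hY0last : Ytil 0 (Fin.last n) = 0)
    (hY0cast : ∀ i : Fin n, Ytil 0 i.castSucc = y i)
    (hYrec : ∀ ℓ (j : Fin (n + 1)),
      Ytil (ℓ + 1) j = Ytil ℓ j - r ℓ * ∑ i : Fin n,
        Ytil ℓ i.castSucc * K (xdata i) (x' j)) :
    ∀ ℓ, Ytil ℓ (Fin.last n) = -(f ℓ x) ∧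
      ∀ i : Fin n, Ytil ℓ i.castSucc = y i - f ℓ (xdata i) := by
  have hcol := iterate_eq_initial_sub_functionalGD K xdata y r f hf0 hfrec
    Fin.castSucc x' hx'cast Ytil hY0cast hYrec
  intro ℓ
  refine ⟨?_, fun i => ?_⟩
  · rw [hcol, hY0last, hx'last, zero_sub]
  · rw [hcol, hY0cast, hx'cast]
end

section
/- Under the setting of the masking lemma with c = y⁽ⁿ⁺¹⁾, the in-context loss E[([Z_{k+1}]_{(d+1),(n+1)} + y⁽ⁿ⁺¹⁾)²] equals E[tr((I − M) Ȳ_{k+1}ᵀ Ȳ_{k+1} (I − M))], where Ȳ_{k+1} ∈ ℝ^{1×(n+1)} is the last row of the dynamics initialized at the unmasked input Z̄_0 (whose last row includes y⁽ⁿ⁺¹⁾), M = diag(I_n, 0), and I − M is the projection onto the (n+1)-th coordinate. -/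
open Matrix MeasureTheory

/-- First `d` rows of a `(d+1) × (n+1)` matrix. -/
def Xrows {d n : ℕ} (Z : Matrix (Fin (d + 1)) (Fin (n + 1)) ℝ) :
    Matrix (Fin d) (Fin (n + 1)) ℝ :=
  Matrix.of fun i j => Z i.castSucc j

/-- Last row of a `(d+1) × (n+1)` matrix. -/
def Yrow {d n : ℕ} (Z : Matrix (Fin (d + 1)) (Fin (n + 1)) ℝ) : Fin (n + 1) → ℝ :=
  Z (Fin.last d)

/-- The mask matrix `M = diag(I_n, 0)`. -/
def maskM (n : ℕ) : Matrix (Fin (n + 1)) (Fin (n + 1)) ℝ :=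
  Matrix.diagonal fun j => if j = Fin.last n then 0 else 1

/-- Block value matrix `V = [[A,0],[0,r]]`. -/
def Vblock {d : ℕ} (A : Matrix (Fin d) (Fin d) ℝ) (r : ℝ) :
    Matrix (Fin (d + 1)) (Fin (d + 1)) ℝ :=
  Matrix.of fun i j =>
    if hi : i = Fin.last d then (if j = Fin.last d then r else 0)
    else if hj : j = Fin.last d then 0 else A (i.castPred hi) (j.castPred hj)

/-!
Adding `c` at the query-label entry `(d+1, n+1)` of a token matrix changes neither its first `d`
rows nor its product with the mask `M`, which kills the last column. Hence one step of the masked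
dynamics commutes with this translation, and by induction the unmasked trajectory is the masked
one translated by `y⁽ⁿ⁺¹⁾` at that entry for all time. Since `I - M` is the matrix unit at
`(n+1, n+1)`, the trace reads off the square of that entry.
-/

section Mask

variable {n : ℕ}

lemma one_sub_maskM : 1 - maskM n = single (Fin.last n) (Fin.last n) (1 : ℝ) := by
  rw [maskM, ← diagonal_one, diagonal_sub, ← diagonal_single]
  congr 1
  ext j
  by_cases hj : j = Fin.last n <;> simp [hj]

lemma trace_one_sub_maskM_mul_vecMulVec (v : Fin (n + 1) → ℝ) :
    trace ((1 - maskM n) * vecMulVec v v * (1 - maskM n)) = v (Fin.last n) ^ 2 := by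
  rw [one_sub_maskM, single_mul_mul_single, trace_single_eq_same, vecMulVec_apply]
  ring

lemma single_last_mul_maskM {m : Type*} [DecidableEq m] (i : m) (c : ℝ) :
    single i (Fin.last n) c * maskM n = 0 := by
  ext i' j
  by_cases hj : j = Fin.last n <;> simp [maskM, hj, single_apply, eq_comm]

end Mask

section Blocks

variable {d n : ℕ}

lemma Xrows_add_single_last (W : Matrix (Fin (d + 1)) (Fin (n + 1)) ℝ) (j : Fin (n + 1))
    (c : ℝ) : Xrows (W + single (Fin.last d) j c) = Xrows W := by
  ext i j'
  simp [Xrows, single_apply, (Fin.castSucc_lt_last i).ne']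

lemma eq_add_single_last_of_Xrows_eq_of_Yrow_eq {W W' : Matrix (Fin (d + 1)) (Fin (n + 1)) ℝ}
    {j : Fin (n + 1)} {c : ℝ} (hX : Xrows W' = Xrows W) (hY : Yrow W' = Yrow W + Pi.single j c) :
    W' = W + single (Fin.last d) j c := by
  ext i j'
  induction i using Fin.lastCases with
  | last =>
    simpa [Yrow, single_apply, Pi.single_apply, eq_comm] using congrFun hY j'
  | cast i =>
    simpa [Xrows, single_apply, (Fin.castSucc_lt_last i).ne'] using congrFun (congrFun hX i) j'

def maskedStep (V : Matrix (Fin (d + 1)) (Fin (d + 1)) ℝ)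
    (G : Matrix (Fin d) (Fin (n + 1)) ℝ → Matrix (Fin (n + 1)) (Fin (n + 1)) ℝ)
    (W : Matrix (Fin (d + 1)) (Fin (n + 1)) ℝ) : Matrix (Fin (d + 1)) (Fin (n + 1)) ℝ :=
  W + V * W * maskM n * G (Xrows W)

lemma maskedStep_add_single_last (V : Matrix (Fin (d + 1)) (Fin (d + 1)) ℝ)
    (G : Matrix (Fin d) (Fin (n + 1)) ℝ → Matrix (Fin (n + 1)) (Fin (n + 1)) ℝ)
    (W : Matrix (Fin (d + 1)) (Fin (n + 1)) ℝ) (c : ℝ) :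
    maskedStep V G (W + single (Fin.last d) (Fin.last n) c) =
      maskedStep V G W + single (Fin.last d) (Fin.last n) c := by
  rw [maskedStep, maskedStep, Xrows_add_single_last, Matrix.mul_add, Matrix.add_mul,
    Matrix.mul_assoc V (single _ _ c), single_last_mul_maskM, Matrix.mul_zero, add_zero]
  abel

end Blocks

lemma eq_add_of_map_add_eq {G : Type*} [Add G] (f : ℕ → G → G) (e : G)
    (hf : ∀ ℓ x, f ℓ (x + e) = f ℓ x + e) {u v : ℕ → G} (hu : ∀ ℓ, u (ℓ + 1) = f ℓ (u ℓ))
    (hv : ∀ ℓ, v (ℓ + 1) = f ℓ (v ℓ)) (h0 : v 0 = u 0 + e) : ∀ ℓ, v ℓ = u ℓ + e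
  | 0 => h0
  | ℓ + 1 => by rw [hu, hv, eq_add_of_map_add_eq f e hf hu hv h0 ℓ, hf]

theorem icl_loss_trace_form_general
    {d n k : ℕ} {Ω : Type*} [MeasurableSpace Ω] (μ : Measure Ω)
    (htil : Matrix (Fin d) (Fin (n + 1)) ℝ → Matrix (Fin d) (Fin (n + 1)) ℝ →
      Matrix (Fin (n + 1)) (Fin (n + 1)) ℝ)
    (A : ℕ → Matrix (Fin d) (Fin d) ℝ) (r : ℕ → ℝ)
    (B C : ℕ → Matrix (Fin d) (Fin d) ℝ)
    (ynp1 : Ω → ℝ)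
    (Z Zbar : Ω → ℕ → Matrix (Fin (d + 1)) (Fin (n + 1)) ℝ)
    (hrec : ∀ ω ℓ, Z ω (ℓ + 1) = Z ω ℓ +
      Vblock (A ℓ) (r ℓ) * Z ω ℓ * maskM n *
        htil (B ℓ * Xrows (Z ω ℓ)) (C ℓ * Xrows (Z ω ℓ)))
    (hrecbar : ∀ ω ℓ, Zbar ω (ℓ + 1) = Zbar ω ℓ +
      Vblock (A ℓ) (r ℓ) * Zbar ω ℓ * maskM n *
        htil (B ℓ * Xrows (Zbar ω ℓ)) (C ℓ * Xrows (Zbar ω ℓ)))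
    (hX0 : ∀ ω, Xrows (Zbar ω 0) = Xrows (Z ω 0))
    (hY0 : ∀ ω, Yrow (Zbar ω 0) =
      Yrow (Z ω 0) + fun j => if j = Fin.last n then ynp1 ω else 0) :
    ∫ ω, (Z ω (k + 1) (Fin.last d) (Fin.last n) + ynp1 ω) ^ 2 ∂μ =
      ∫ ω, Matrix.trace ((1 - maskM n) *
        Matrix.vecMulVec (Yrow (Zbar ω (k + 1))) (Yrow (Zbar ω (k + 1))) *
          (1 - maskM n)) ∂μ := by
  have hY0' : ∀ ω, Yrow (Zbar ω 0) = Yrow (Z ω 0) + Pi.single (Fin.last n) (ynp1 ω) := by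
    intro ω
    rw [hY0]
    congr 1
    ext j
    simp [Pi.single_apply]
  have hshift : ∀ ω, Zbar ω (k + 1) = Z ω (k + 1) + single (Fin.last d) (Fin.last n) (ynp1 ω) :=
    fun ω => eq_add_of_map_add_eq
      (fun ℓ => maskedStep (Vblock (A ℓ) (r ℓ)) fun X => htil (B ℓ * X) (C ℓ * X)) _
      (fun _ _ => maskedStep_add_single_last _ _ _ _) (hrec ω) (hrecbar ω)
      (eq_add_single_last_of_Xrows_eq_of_Yrow_eq (hX0 ω) (hY0' ω)) (k + 1)
  refine integral_congr_ae (Filter.Eventually.of_forall fun ω => ?_)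
  beta_reduce
  rw [trace_one_sub_maskM_mul_vecMulVec, Yrow, hshift, Matrix.add_apply, single_apply_same]

/-- Reformulating the in-context loss: with the masked trajectory `Z` (query label
zeroed out) and the unmasked trajectory `Z̄` (query label `y⁽ⁿ⁺¹⁾` included),
`E[([Z_{k+1}]_{(d+1),(n+1)} + y⁽ⁿ⁺¹⁾)²] = E[tr((I−M) Ȳ_{k+1}ᵀ Ȳ_{k+1} (I−M))]`. -/
theorem icl_loss_trace_form
    {d n k : ℕ} {Ω : Type*} [MeasurableSpace Ω] (μ : Measure Ω)
    (htil : Matrix (Fin d) (Fin (n + 1)) ℝ → Matrix (Fin d) (Fin (n + 1)) ℝ →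
      Matrix (Fin (n + 1)) (Fin (n + 1)) ℝ)
    (A : ℕ → Matrix (Fin d) (Fin d) ℝ) (r : ℕ → ℝ)
    (B C : ℕ → Matrix (Fin d) (Fin d) ℝ)
    (ynp1 : Ω → ℝ)
    (Z Zbar : Ω → ℕ → Matrix (Fin (d + 1)) (Fin (n + 1)) ℝ)
    (hrec : ∀ ω ℓ, Z ω (ℓ + 1) = Z ω ℓ +
      Vblock (A ℓ) (r ℓ) * Z ω ℓ * maskM n *
        htil (B ℓ * Xrows (Z ω ℓ)) (C ℓ * Xrows (Z ω ℓ)))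
    (hrecbar : ∀ ω ℓ, Zbar ω (ℓ + 1) = Zbar ω ℓ +
      Vblock (A ℓ) (r ℓ) * Zbar ω ℓ * maskM n *
        htil (B ℓ * Xrows (Zbar ω ℓ)) (C ℓ * Xrows (Zbar ω ℓ)))
    (hX0 : ∀ ω, Xrows (Zbar ω 0) = Xrows (Z ω 0))
    (hZ0last : ∀ ω, Yrow (Z ω 0) (Fin.last n) = 0)
    (hY0 : ∀ ω, Yrow (Zbar ω 0) =
      Yrow (Z ω 0) + fun j => if j = Fin.last n then ynp1 ω else 0) :
    ∫ ω, (Z ω (k + 1) (Fin.last d) (Fin.last n) + ynp1 ω) ^ 2 ∂μ =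
      ∫ ω, Matrix.trace ((1 - maskM n) *
        Matrix.vecMulVec (Yrow (Zbar ω (k + 1))) (Yrow (Zbar ω (k + 1))) *
          (1 - maskM n)) ∂μ :=
  icl_loss_trace_form_general μ htil A r B C ynp1 Z Zbar hrec hrecbar hX0 hY0
end
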